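/- arXiv:0907.2634 — 9 statements merged into one kernel-verified Lean document; each statement's English description precedes it below -/
import Mathlib

section
/- Let (H_k)_{k∈K} be a nonempty family of graphs and let G be a graph. Then G is isomorphic to an induced subgraph of a nonempty direct product of ultraproducts of members of the family (i.e., there exist a nonempty index set J and, for each j ∈ J, a nonempty index set I_j, an ultrafilter U_j on I_j, and indices k(j,i) ∈ K for i ∈ I_j such that G is isomorphic to an induced subgraph of the direct product ∏_{j∈J} (∏_{U_j} H_{k(j,i)})) if and only if the adjacency semigroup A(G) is a homomorphic image of a unary subsemigroup of a direct product of adjacency semigroups of members of the family (i.e., there exist an index set I', indices k_i ∈ K for i ∈ I', a subsemigroup T of the direct product ∏_{i∈I'} A(H_{k_i}) closed under reversion, and a surjective unary semigroup homomorphism from T onto A(G)). -/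
/-!
(⇒) Through an induced embedding `e` of `G` into `∏ⱼ ∏_{Uⱼ} H_{k j i}`, a tuple of
`∏_{(j,i)} A(H_{k j i})` stands for `(a, b) ∈ A(G)` if on every block `j` it is `Uⱼ`-almost
everywhere `(e a j, e b j)`, and for `0` if it vanishes almost everywhere on some block. The tuples
standing for something form a unary subsemigroup, mapped onto `A(G)`.

(⇐) By compactness (an ultrafilter on the finite subsets of `G`) it suffices to find, for every
finite `F ⊆ G`, every pair `a ≠ b` and every non-edge `a ≁ b`, a homomorphism `F → H_k` that
separates it. Given an edge `p ∼ q` of `G` and preimages `σ ↦ (p,p)`, `θ c ↦ (c,q)`, a product of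
`θ b`, the factors `θ(c)' θ(d) ↦ (q,q)` for the edges `c ∼ d` of `F` and `θ(a)'`, glued together
by reversions against `σ`, maps to `(b,a)`; at each nonzero coordinate `(x,y)` of it the first
entries of the `θ c` form a homomorphism `F → H` sending `a ↦ y`, `b ↦ x`. If every such
homomorphism merged `a` and `b` (made `a ∼ b`), this tuple would be fixed by reversion
(idempotent), contradicting `(b,a)' ≠ (b,a)` (`(b,a)² = 0`).
-/

/-- Multiplication of the adjacency semigroup `A(G)` of a graph `G = ⟨V; r⟩`:
the carrier is `Option (V × V)` with `none` playing the role of the zero element. -/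
noncomputable def adjMul {V : Type*} (r : V → V → Prop) :
    Option (V × V) → Option (V × V) → Option (V × V)
  | some (x, y), some (z, t) =>
      @ite _ (r y z) (Classical.propDecidable _) (some (x, t)) none
  | _, _ => none

/-- Reversion in the adjacency semigroup: `(x,y)' = (y,x)` and `0' = 0`. -/
def adjStar {V : Type*} : Option (V × V) → Option (V × V)
  | some (x, y) => some (y, x)
  | none => none

/-- The setoid on the direct product `∀ i, W i` identifying functions that agree
`U`-almost everywhere, for an ultrafilter `U` on `I`. -/
def uprodSetoid {I : Type*} (U : Ultrafilter I) (W : I → Type*) :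
    Setoid (∀ i, W i) where
  r f g := ∀ᶠ i in (U : Filter I), f i = g i
  iseqv :=
    ⟨fun _ => Filter.Eventually.of_forall fun _ => rfl,
     fun h => h.mono fun _ hi => hi.symm,
     fun h1 h2 => (h1.and h2).mono fun _ hi => hi.1.trans hi.2⟩

/-- The edge relation of the ultraproduct graph `∏_U ⟨W i; rel i⟩`:
`[f] ∼ [g]` iff `{i : f i ∼ g i} ∈ U`. -/
def uprodRel {I : Type*} (U : Ultrafilter I) {W : I → Type*}
    (rel : ∀ i, W i → W i → Prop) :
    Quotient (uprodSetoid U W) → Quotient (uprodSetoid U W) → Prop :=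
  fun a b => ∃ f g : ∀ i, W i,
    a = Quotient.mk (uprodSetoid U W) f ∧ b = Quotient.mk (uprodSetoid U W) g ∧
    ∀ᶠ i in (U : Filter I), rel i (f i) (g i)

open Filter

section AdjacencySemigroup

variable {V : Type*} {r : V → V → Prop}

@[simp]
theorem adjMul_none_left (b : Option (V × V)) : adjMul r none b = none := rfl

@[simp]
theorem adjMul_none_right (a : Option (V × V)) : adjMul r a none = none := by
  rcases a with _ | ⟨x, y⟩ <;> rfl

theorem adjMul_some_of_adj {x y z t : V} (h : r y z) :
    adjMul r (some (x, y)) (some (z, t)) = some (x, t) := by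
  simp [adjMul, h]

theorem adjMul_none_of_not_adj {x y z t : V} (h : ¬ r y z) :
    adjMul r (some (x, y)) (some (z, t)) = none := by
  simp [adjMul, h]

theorem adjMul_eq_some_iff {a b : Option (V × V)} {x t : V} :
    adjMul r a b = some (x, t) ↔ ∃ y z, a = some (x, y) ∧ b = some (z, t) ∧ r y z := by
  rcases a with _ | ⟨x', y⟩ <;> rcases b with _ | ⟨z, t'⟩ <;> simp [adjMul]
  by_cases h : r y z <;> simp [h, and_comm, eq_comm]

@[simp]
theorem adjStar_some (x y : V) : adjStar (some (x, y)) = some (y, x) := rfl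

@[simp]
theorem adjStar_none : adjStar (none : Option (V × V)) = none := rfl

theorem adjStar_eq_some_iff {a : Option (V × V)} {x y : V} :
    adjStar a = some (x, y) ↔ a = some (y, x) := by
  rcases a with _ | ⟨u, v⟩ <;> simp [adjStar, and_comm]

end AdjacencySemigroup

section Graphs

variable {V X : Type*}

def IsHomOn (rG : V → V → Prop) (s : X → X → Prop) (F : Finset V) (w : V → X) : Prop :=
  ∀ a ∈ F, ∀ b ∈ F, rG a b → s (w a) (w b)

/-- The empty condition `none` keeps the index type of the product of ultraproducts nonempty. -/
def Reflects (rG : V → V → Prop) (s : X → X → Prop) (w : V → X) :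
    Option ((V × V) ⊕ (V × V)) → Prop
  | none => True
  | some (.inl (a, b)) => w a = w b → a = b
  | some (.inr (a, b)) => s (w a) (w b) → rG a b

end Graphs

section Tuples

variable {I : Type*} {H : I → Type*} (r : ∀ i, H i → H i → Prop)

noncomputable def tupleMul (f g : ∀ i, Option (H i × H i)) : ∀ i, Option (H i × H i) :=
  fun i => adjMul (r i) (f i) (g i)

def tupleStar (f : ∀ i, Option (H i × H i)) : ∀ i, Option (H i × H i) :=
  fun i => adjStar (f i)

structure IsUnaryHomImage {V : Type*} (rG : V → V → Prop) (B : Set (∀ i, Option (H i × H i)))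
    (φ : (∀ i, Option (H i × H i)) → Option (V × V)) : Prop where
  mul_mem : ∀ f ∈ B, ∀ g ∈ B, tupleMul r f g ∈ B
  map_mul : ∀ f ∈ B, ∀ g ∈ B, φ (tupleMul r f g) = adjMul rG (φ f) (φ g)
  star_mem : ∀ f ∈ B, tupleStar f ∈ B
  map_star : ∀ f ∈ B, φ (tupleStar f) = adjStar (φ f)
  surj : ∀ y, ∃ f ∈ B, φ f = y

theorem isUnaryHomImage_iff {V : Type*} {rG : V → V → Prop} {B : Set (∀ i, Option (H i × H i))}
    {φ : (∀ i, Option (H i × H i)) → Option (V × V)} :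
    IsUnaryHomImage r rG B φ ↔
      (∀ f ∈ B, ∀ g ∈ B, tupleMul r f g ∈ B ∧ φ (tupleMul r f g) = adjMul rG (φ f) (φ g)) ∧
      (∀ f ∈ B, tupleStar f ∈ B ∧ φ (tupleStar f) = adjStar (φ f)) ∧
      ∀ y, ∃ f ∈ B, φ f = y :=
  ⟨fun h => ⟨fun f hf g hg => ⟨h.mul_mem f hf g hg, h.map_mul f hf g hg⟩,
      fun f hf => ⟨h.star_mem f hf, h.map_star f hf⟩, h.surj⟩,
    fun ⟨hmul, hstar, hsurj⟩ => ⟨fun f hf g hg => (hmul f hf g hg).1,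
      fun f hf g hg => (hmul f hf g hg).2, fun f hf => (hstar f hf).1,
      fun f hf => (hstar f hf).2, hsurj⟩⟩

variable {r}

theorem tupleMul_apply_eq_some_iff {f g : ∀ i, Option (H i × H i)} {i : I} {x t : H i} :
    tupleMul r f g i = some (x, t) ↔ ∃ y z, f i = some (x, y) ∧ g i = some (z, t) ∧ r i y z :=
  adjMul_eq_some_iff

theorem tupleStar_apply_eq_some_iff {f : ∀ i, Option (H i × H i)} {i : I} {x y : H i} :
    tupleStar f i = some (x, y) ↔ f i = some (y, x) :=
  adjStar_eq_some_iff

theorem exists_isUnaryHomImage_of_rel {V : Type*} {rG : V → V → Prop} (R : (∀ i, Option (H i × H i)) → Option (V × V) → Prop)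
    (unique : ∀ f y z, R f y → R f z → y = z)
    (mul : ∀ f g y z, R f y → R g z → R (tupleMul r f g) (adjMul rG y z))
    (star : ∀ f y, R f y → R (tupleStar f) (adjStar y)) (surj : ∀ y, ∃ f, R f y) :
    ∃ B φ, IsUnaryHomImage r rG B φ := by
  classical
  let φ f : Option (V × V) := if h : ∃ y, R f y then h.choose else none
  have hφ : ∀ f y, R f y → φ f = y := fun f y h => by
    have hex : ∃ y, R f y := ⟨y, h⟩
    simp only [φ, dif_pos hex]
    exact unique f _ _ hex.choose_spec h
  refine ⟨{f | ∃ y, R f y}, φ, ⟨?_, ?_, ?_, ?_, fun y => ?_⟩⟩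
  · rintro f ⟨y, hf⟩ g ⟨z, hg⟩
    exact ⟨_, mul f g y z hf hg⟩
  · rintro f ⟨y, hf⟩ g ⟨z, hg⟩
    rw [hφ f y hf, hφ g z hg, hφ _ _ (mul f g y z hf hg)]
  · rintro f ⟨y, hf⟩
    exact ⟨_, star f y hf⟩
  · rintro f ⟨y, hf⟩
    rw [hφ f y hf, hφ _ _ (star f y hf)]
  · obtain ⟨f, hf⟩ := surj y
    exact ⟨f, ⟨y, hf⟩, hφ f y hf⟩

end Tuples

section Backward

variable {I : Type*} {H : I → Type*} {r : ∀ i, H i → H i → Prop} {V : Type*}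
  {rG : V → V → Prop} {B : Set (∀ i, Option (H i × H i))}
  {φ : (∀ i, Option (H i × H i)) → Option (V × V)} {f g : ∀ i, Option (H i × H i)}

/-- If `σ ↦ (p,p)`, `f ↦ (x,q)` and `p ∼ q`, then `(σ f')' ↦ (x,p)`: the second coordinate is
moved from `q` to `p` without needing an edge out of `q`. -/
noncomputable def reanchor (r : ∀ i, H i → H i → Prop) (σ f : ∀ i, Option (H i × H i)) :
    ∀ i, Option (H i × H i) :=
  tupleStar (tupleMul r σ (tupleStar f))

theorem exists_eq_some_of_reanchor_eq_some {σ : ∀ i, Option (H i × H i)} {i : I} {x y : H i}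
    (h : reanchor r σ f i = some (x, y)) : ∃ y', f i = some (x, y') := by
  simp only [reanchor, tupleStar_apply_eq_some_iff, tupleMul_apply_eq_some_iff] at h
  obtain ⟨_, y', _, hf, _⟩ := h
  exact ⟨y', hf⟩

def HeadsAdjacent (r : ∀ i, H i → H i → Prop) (θ : V → ∀ i, Option (H i × H i)) (i : I)
    (c d : V) : Prop :=
  ∃ x y x' y', θ c i = some (x, y) ∧ θ d i = some (x', y') ∧ r i x x'

namespace IsUnaryHomImage

theorem mul_mem_preimage (hφ : IsUnaryHomImage r rG B φ) {x y z t : V}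
    (hf : f ∈ B ∩ φ ⁻¹' {some (x, y)}) (hg : g ∈ B ∩ φ ⁻¹' {some (z, t)}) (h : rG y z) :
    tupleMul r f g ∈ B ∩ φ ⁻¹' {some (x, t)} := by
  refine ⟨hφ.mul_mem f hf.1 g hg.1, ?_⟩
  simp only [Set.mem_preimage, Set.mem_singleton_iff] at hf hg ⊢
  rw [hφ.map_mul f hf.1 g hg.1, hf.2, hg.2, adjMul_some_of_adj h]

theorem star_mem_preimage (hφ : IsUnaryHomImage r rG B φ) {x y : V}
    (hf : f ∈ B ∩ φ ⁻¹' {some (x, y)}) : tupleStar f ∈ B ∩ φ ⁻¹' {some (y, x)} := by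
  refine ⟨hφ.star_mem f hf.1, ?_⟩
  simp only [Set.mem_preimage, Set.mem_singleton_iff] at hf ⊢
  rw [hφ.map_star f hf.1, hf.2, adjStar_some]

theorem exists_apply_ne_none (hφ : IsUnaryHomImage r rG B φ) {p : V × V}
    (hf : f ∈ B ∩ φ ⁻¹' {some p}) : ∃ i, f i ≠ none := by
  by_contra! hnone
  obtain ⟨g, hg, hgv⟩ := hφ.surj none
  have hfg : tupleMul r f g = f := funext fun i => by simp [tupleMul, hnone i]
  have := hφ.map_mul f hf.1 g hg
  rw [hfg, hgv, adjMul_none_right, hf.2] at this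
  exact Option.some_ne_none p this

theorem not_idempotent_of_not_adj (hφ : IsUnaryHomImage r rG B φ) {a b : V}
    (hf : f ∈ B ∩ φ ⁻¹' {some (b, a)}) (hab : ¬ rG a b) : tupleMul r f f ≠ f := by
  intro hff
  have := hφ.map_mul f hf.1 f hf.1
  rw [hff, hf.2, adjMul_none_of_not_adj hab] at this
  exact Option.some_ne_none _ this

theorem exists_not_loop (hφ : IsUnaryHomImage r rG B φ) {a : V} (ha : ¬ rG a a) :
    ∃ i, ∃ z : H i, ¬ r i z z := by
  by_contra! hloop
  obtain ⟨f, hf, hfv⟩ := hφ.surj (some (a, a))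
  -- `f f' f = f` componentwise, while `(a,a)(a,a)' = 0` in `A(G)`
  have hff : tupleMul r (tupleMul r f (tupleStar f)) f = f := funext fun i => by
    rcases hfi : f i with _ | ⟨x, y⟩
    · simp [tupleMul, hfi]
    · simp only [tupleMul, tupleStar, hfi, adjStar_some,
        adjMul_some_of_adj (hloop i y), adjMul_some_of_adj (hloop i x)]
  have := hφ.map_mul _ (hφ.mul_mem f hf _ (hφ.star_mem f hf)) f hf
  rw [hff, hφ.map_mul f hf _ (hφ.star_mem f hf), hφ.map_star f hf, hfv, adjStar_some,
    adjMul_none_of_not_adj ha, adjMul_none_left] at this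
  exact Option.some_ne_none _ this

theorem exists_preimage_headsAdjacent (hφ : IsUnaryHomImage r rG B φ) {p q : V} (hpq : rG p q)
    {σ : ∀ i, Option (H i × H i)} (hσ : σ ∈ B ∩ φ ⁻¹' {some (p, p)})
    {θ : V → ∀ i, Option (H i × H i)} (hθ : ∀ c, θ c ∈ B ∩ φ ⁻¹' {some (c, q)})
    (b : V) (S : Finset (V × V)) :
    ∃ P ∈ B ∩ φ ⁻¹' {some (b, q)}, ∀ i x y, P i = some (x, y) →
      (∃ y', θ b i = some (x, y')) ∧ ∀ e ∈ S, rG e.1 e.2 → HeadsAdjacent r θ i e.1 e.2 := by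
  classical
  induction S using Finset.induction_on with
  | empty => exact ⟨θ b, hθ b, fun i x y h => ⟨⟨y, h⟩, by simp⟩⟩
  | insert e S _ ih =>
    obtain ⟨P, hP, hPi⟩ := ih
    by_cases he : rG e.1 e.2
    · -- append the factor `θ(e₁)' θ(e₂) ↦ (q,q)`, whose nonzero coordinates witness the edge
      have hre : reanchor r σ P ∈ B ∩ φ ⁻¹' {some (b, p)} :=
        hφ.star_mem_preimage (hφ.mul_mem_preimage hσ (hφ.star_mem_preimage hP) hpq)
      have htest : tupleMul r (tupleStar (θ e.1)) (θ e.2) ∈ B ∩ φ ⁻¹' {some (q, q)} :=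
        hφ.mul_mem_preimage (hφ.star_mem_preimage (hθ e.1)) (hθ e.2) he
      refine ⟨_, hφ.mul_mem_preimage hre htest hpq, fun i x y h => ?_⟩
      obtain ⟨_, _, hrei, htesti, -⟩ := tupleMul_apply_eq_some_iff.mp h
      obtain ⟨y', hPi'⟩ := exists_eq_some_of_reanchor_eq_some hrei
      obtain ⟨_, _, hc, hd, hcd⟩ := tupleMul_apply_eq_some_iff.mp htesti
      obtain ⟨hb, hS⟩ := hPi i x y' hPi'
      refine ⟨hb, (Finset.forall_mem_insert _ _ _).mpr ⟨fun _ => ?_, hS⟩⟩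
      exact ⟨_, _, _, _, tupleStar_apply_eq_some_iff.mp hc, hd, hcd⟩
    · refine ⟨P, hP, fun i x y h => ⟨(hPi i x y h).1, (Finset.forall_mem_insert _ _ _).mpr
        ⟨fun h' => absurd h' he, (hPi i x y h).2⟩⟩⟩

theorem exists_preimage_isHomOn_of_adj (hφ : IsUnaryHomImage r rG B φ) {p q : V}
    (hpq : rG p q) (F : Finset V) (a b : V) :
    ∃ P ∈ B ∩ φ ⁻¹' {some (b, a)}, ∀ i x y, P i = some (x, y) →
      ∃ w : V → H i, IsHomOn rG (r i) F w ∧ w a = y ∧ w b = x := by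
  obtain ⟨σ, hσ, hσv⟩ := hφ.surj (some (p, p))
  choose θ hθ hθv using fun c => hφ.surj (some (c, q))
  obtain ⟨P, hP, hPi⟩ := hφ.exists_preimage_headsAdjacent hpq ⟨hσ, hσv⟩
    (fun c => ⟨hθ c, hθv c⟩) b (F ×ˢ F)
  have hre : reanchor r σ P ∈ B ∩ φ ⁻¹' {some (b, p)} :=
    hφ.star_mem_preimage (hφ.mul_mem_preimage ⟨hσ, hσv⟩ (hφ.star_mem_preimage hP) hpq)
  refine ⟨_, hφ.mul_mem_preimage hre (hφ.star_mem_preimage ⟨hθ a, hθv a⟩) hpq,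
    fun i x y h => ?_⟩
  obtain ⟨_, _, hrei, hai, -⟩ := tupleMul_apply_eq_some_iff.mp h
  obtain ⟨y', hPi'⟩ := exists_eq_some_of_reanchor_eq_some hrei
  obtain ⟨⟨_, hbi⟩, hedges⟩ := hPi i x y' hPi'
  refine ⟨fun c => ((θ c i).map Prod.fst).getD x, fun c hc d hd hcd => ?_, ?_, ?_⟩
  · obtain ⟨_, _, _, _, hci, hdi, hr⟩ := hedges (c, d) (Finset.mk_mem_product hc hd) hcd
    simpa [hci, hdi] using hr
  · simp [tupleStar_apply_eq_some_iff.mp hai]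
  · simp [hbi]

theorem exists_preimage_isHomOn (hφ : IsUnaryHomImage r rG B φ) (F : Finset V) {a b : V}
    (h : (∃ p q, rG p q) ∨ a ≠ b) :
    ∃ P ∈ B ∩ φ ⁻¹' {some (b, a)}, ∀ i x y, P i = some (x, y) →
      ∃ w : V → H i, IsHomOn rG (r i) F w ∧ w a = y ∧ w b = x := by
  classical
  by_cases hG : ∃ p q, rG p q
  · obtain ⟨p, q, hpq⟩ := hG
    exact hφ.exists_preimage_isHomOn_of_adj hpq F a b
  · have hab : a ≠ b := h.resolve_left hG
    obtain ⟨P, hP, hPv⟩ := hφ.surj (some (b, a))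
    refine ⟨P, ⟨hP, hPv⟩, fun i x y _ => ⟨fun c => if c = a then y else x,
      fun c _ d _ hcd => absurd ⟨c, d, hcd⟩ hG, by simp, by simp [hab.symm]⟩⟩

theorem exists_isHomOn (hφ : IsUnaryHomImage r rG B φ) (v : V) (F : Finset V) :
    ∃ i, ∃ w : V → H i, IsHomOn rG (r i) F w := by
  by_cases hG : ∃ p q, rG p q
  · obtain ⟨P, hP, hPi⟩ := hφ.exists_preimage_isHomOn F (a := v) (b := v) (Or.inl hG)
    obtain ⟨i, hi⟩ := hφ.exists_apply_ne_none hP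
    obtain ⟨⟨x, y⟩, hxy⟩ := Option.ne_none_iff_exists'.mp hi
    obtain ⟨w, hw, -⟩ := hPi i x y hxy
    exact ⟨i, w, hw⟩
  · obtain ⟨P, hP, hPv⟩ := hφ.surj (some (v, v))
    obtain ⟨i, hi⟩ := hφ.exists_apply_ne_none (f := P) ⟨hP, hPv⟩
    obtain ⟨⟨x, -⟩, -⟩ := Option.ne_none_iff_exists'.mp hi
    exact ⟨i, fun _ => x, fun c _ d _ hcd => absurd ⟨c, d, hcd⟩ hG⟩

theorem exists_isHomOn_ne (hφ : IsUnaryHomImage r rG B φ) (F : Finset V) {a b : V}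
    (hab : a ≠ b) : ∃ i, ∃ w : V → H i, IsHomOn rG (r i) F w ∧ w a ≠ w b := by
  by_contra! hcon
  obtain ⟨P, hP, hPi⟩ := hφ.exists_preimage_isHomOn F (Or.inr hab)
  have hPP : tupleStar P = P := funext fun i => by
    rcases hPi' : P i with _ | ⟨x, y⟩
    · simp [tupleStar, hPi']
    · obtain ⟨w, hw, rfl, rfl⟩ := hPi i x y hPi'
      simp [tupleStar, hPi', hcon i w hw]
  have hPv : φ P = some (a, b) := hPP ▸ (hφ.star_mem_preimage hP).2
  exact hab (Prod.ext_iff.mp (Option.some_inj.mp (hPv.symm.trans hP.2))).1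

theorem exists_isHomOn_not_adj (hφ : IsUnaryHomImage r rG B φ) (F : Finset V) {a b : V}
    (hab : ¬ rG a b) : ∃ i, ∃ w : V → H i, IsHomOn rG (r i) F w ∧ ¬ r i (w a) (w b) := by
  by_cases h : (∃ p q, rG p q) ∨ a ≠ b
  · by_contra! hcon
    obtain ⟨P, hP, hPi⟩ := hφ.exists_preimage_isHomOn F h
    refine hφ.not_idempotent_of_not_adj hP hab (funext fun i => ?_)
    rcases hPi' : P i with _ | ⟨x, y⟩
    · simp [tupleMul, hPi']
    · obtain ⟨w, hw, rfl, rfl⟩ := hPi i x y hPi'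
      simp only [tupleMul, hPi']
      exact adjMul_some_of_adj (hcon i w hw)
  · obtain ⟨hG, rfl⟩ : (¬ ∃ p q, rG p q) ∧ a = b := by simpa using h
    obtain ⟨i, z, hz⟩ := hφ.exists_not_loop hab
    exact ⟨i, fun _ => z, fun c _ d _ hcd => absurd ⟨c, d, hcd⟩ hG, hz⟩

theorem exists_isHomOn_reflects (hφ : IsUnaryHomImage r rG B φ) [Nonempty V]
    (t : Option ((V × V) ⊕ (V × V))) (F : Finset V) :
    ∃ i, ∃ w : V → H i, IsHomOn rG (r i) F w ∧ Reflects rG (r i) w t := by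
  rcases t with _ | ⟨a, b⟩ | ⟨a, b⟩
  · obtain ⟨i, w, hw⟩ := hφ.exists_isHomOn (Classical.arbitrary V) F
    exact ⟨i, w, hw, trivial⟩
  · by_cases hab : a = b
    · obtain ⟨i, w, hw⟩ := hφ.exists_isHomOn a F
      exact ⟨i, w, hw, fun _ => hab⟩
    · obtain ⟨i, w, hw, hne⟩ := hφ.exists_isHomOn_ne F hab
      exact ⟨i, w, hw, fun h => absurd h hne⟩
  · by_cases hab : rG a b
    · obtain ⟨i, w, hw⟩ := hφ.exists_isHomOn a F
      exact ⟨i, w, hw, fun _ => hab⟩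
    · obtain ⟨i, w, hw, hne⟩ := hφ.exists_isHomOn_not_adj F hab
      exact ⟨i, w, hw, fun h => absurd h hne⟩

end IsUnaryHomImage

end Backward

section UltraproductColumns

variable {I : Type*} {U : Ultrafilter I} {X : I → Type*} {s : ∀ i, X i → X i → Prop}
  {c d : ∀ i, Option (X i × X i)} {x y x' y' : Quotient (uprodSetoid U X)}

theorem uprodRel_mk_iff {I : Type*} {U : Ultrafilter I} {X : I → Type*}
    {s : ∀ i, X i → X i → Prop} {f g : ∀ i, X i} :
    uprodRel U s (Quotient.mk _ f) (Quotient.mk _ g) ↔ ∀ᶠ i in (U : Filter I), s i (f i) (g i) :=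
  ⟨fun ⟨_, _, hf, hg, h⟩ => ((Quotient.exact hf).and ((Quotient.exact hg).and h)).mono
      fun _ ⟨hfi, hgi, hi⟩ => hfi ▸ hgi ▸ hi,
    fun h => ⟨f, g, rfl, rfl, h⟩⟩

theorem uprodRel_iff_out : uprodRel U s x y ↔ ∀ᶠ i in (U : Filter I), s i (x.out i) (y.out i) := by
  conv_lhs => rw [← Quotient.out_eq x, ← Quotient.out_eq y]
  exact uprodRel_mk_iff

variable (U) in
def RepresentsPair (c : ∀ i, Option (X i × X i)) (x y : Quotient (uprodSetoid U X)) : Prop :=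
  ∀ᶠ i in (U : Filter I), c i = some (x.out i, y.out i)

theorem RepresentsPair.unique (h : RepresentsPair U c x y) (h' : RepresentsPair U c x' y') :
    x = x' ∧ y = y' := by
  have hxy : ∀ᶠ i in (U : Filter I), x.out i = x'.out i ∧ y.out i = y'.out i :=
    (h.and h').mono fun i ⟨hi, hi'⟩ => Prod.ext_iff.mp (Option.some_inj.mp (hi.symm.trans hi'))
  refine ⟨?_, ?_⟩
  · rw [← Quotient.out_eq x, ← Quotient.out_eq x']
    exact Quotient.sound (hxy.mono fun _ => And.left)
  · rw [← Quotient.out_eq y, ← Quotient.out_eq y']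
    exact Quotient.sound (hxy.mono fun _ => And.right)

theorem RepresentsPair.not_eventually_none (h : RepresentsPair U c x y) :
    ¬ ∀ᶠ i in (U : Filter I), c i = none := fun hnone =>
  let ⟨_, hi, hi'⟩ := (h.and hnone).exists
  Option.some_ne_none _ (hi.symm.trans hi')

theorem RepresentsPair.mul (hc : RepresentsPair U c x y) (hd : RepresentsPair U d x' y')
    (h : uprodRel U s y x') : RepresentsPair U (tupleMul s c d) x y' :=
  (hc.and (hd.and (uprodRel_iff_out.mp h))).mono fun i ⟨hci, hdi, hi⟩ => by
    simp only [tupleMul, hci, hdi, adjMul_some_of_adj hi]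

theorem RepresentsPair.mul_eventually_none (hc : RepresentsPair U c x y)
    (hd : RepresentsPair U d x' y') (h : ¬ uprodRel U s y x') :
    ∀ᶠ i in (U : Filter I), tupleMul s c d i = none := by
  rw [uprodRel_iff_out, ← Ultrafilter.eventually_not] at h
  exact (hc.and (hd.and h)).mono fun i ⟨hci, hdi, hi⟩ => by
    simp only [tupleMul, hci, hdi, adjMul_none_of_not_adj hi]

theorem RepresentsPair.star (h : RepresentsPair U c x y) : RepresentsPair U (tupleStar c) y x :=
  h.mono fun i hi => by simp only [tupleStar, hi, adjStar_some]

end UltraproductColumns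

section Embeddings

universe u v w

variable {K : Type u} {W : K → Type v} {VG : Type w}

def EmbedsInProdOfUltraprods (rel : ∀ k, W k → W k → Prop) (rG : VG → VG → Prop) : Prop :=
  ∃ (J : Type (max u v w)) (_ : Nonempty J)
    (If : J → Type (max u v w)) (_ : ∀ j, Nonempty (If j))
    (Uf : ∀ j, Ultrafilter (If j)) (k : ∀ j, If j → K)
    (e : VG → ∀ j, Quotient (uprodSetoid (Uf j) (fun i => W (k j i)))),
    Function.Injective e ∧
    ∀ a b : VG, rG a b ↔ ∀ j, uprodRel (Uf j) (fun i => rel (k j i)) (e a j) (e b j)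

theorem embedsInProdOfUltraprods_of_isEmpty [Nonempty K] (rel : ∀ k, W k → W k → Prop)
    (rG : VG → VG → Prop) [IsEmpty VG] : EmbedsInProdOfUltraprods rel rG :=
  ⟨PUnit, ⟨.unit⟩, fun _ => PUnit, fun _ => ⟨.unit⟩, fun _ => pure .unit,
    fun _ _ => Classical.arbitrary K, isEmptyElim, fun a => isEmptyElim a, fun a => isEmptyElim a⟩

/-- Compactness: the coordinates of the `j`-th factor are indexed by the finite subsets `F` of
`VG`, and an ultrafilter containing every cone `{F | F₀ ⊆ F}` makes each `e · j` a homomorphism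
that reflects the condition `j`. -/
theorem embedsInProdOfUltraprods_of_forall_finset {rel : ∀ k, W k → W k → Prop}
    {rG : VG → VG → Prop}
    (h : ∀ t (F : Finset VG), ∃ k, ∃ w : VG → W k,
      IsHomOn rG (rel k) F w ∧ Reflects rG (rel k) w t) :
    EmbedsInProdOfUltraprods rel rG := by
  classical
  choose kk ww hhom hrefl using h
  let U : Ultrafilter (ULift.{max u v} (Finset VG)) :=
    Ultrafilter.of (Filter.map ULift.up Filter.atTop)
  have hU : ∀ F₀ : Finset VG, ∀ᶠ F in (U : Filter (ULift (Finset VG))), F₀ ⊆ F.down := fun F₀ =>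
    Ultrafilter.of_le _ (Filter.mem_map.mpr (Filter.mem_atTop F₀))
  refine ⟨ULift.{max u v} (Option ((VG × VG) ⊕ (VG × VG))), ⟨⟨none⟩⟩,
    fun _ => ULift.{max u v} (Finset VG), fun _ => ⟨⟨∅⟩⟩, fun _ => U,
    fun (t : ULift _) (F : ULift (Finset VG)) => kk t.down F.down,
    fun a t => Quotient.mk _ fun F : ULift (Finset VG) => ww t.down F.down a,
    fun a b hab => ?_, fun a b => ?_⟩
  · obtain ⟨F, hF⟩ := (Quotient.exact (congrFun hab ⟨some (.inl (a, b))⟩)).exists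
    exact hrefl (some (.inl (a, b))) F.down hF
  · simp only [uprodRel_mk_iff]
    refine ⟨fun hab t => (hU {a, b}).mono fun F hF => hhom _ _ a (hF (by simp)) b
      (hF (by simp)) hab, fun hall => ?_⟩
    obtain ⟨F, hF⟩ := (hall ⟨some (.inr (a, b))⟩).exists
    exact hrefl (some (.inr (a, b))) F.down hF

end Embeddings

section ProdUltraprod

variable {J : Type*} {If : J → Type*} {Uf : ∀ j, Ultrafilter (If j)} {X : ∀ j, If j → Type*}
  {s : ∀ j i, X j i → X j i → Prop} {V : Type*} {rG : V → V → Prop}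
  {e : V → ∀ j, Quotient (uprodSetoid (Uf j) (X j))}
  {f g : ∀ p : Σ j, If j, Option (X p.1 p.2 × X p.1 p.2)}

/-- `f ∈ ∏_{(j,i)} A(X j i)` stands for `y ∈ A(G)`, read in `A(∏ⱼ ∏_{Uf j} X j)` through `e`. -/
def Represents (Uf : ∀ j, Ultrafilter (If j)) (e : V → ∀ j, Quotient (uprodSetoid (Uf j) (X j)))
    (f : ∀ p : Σ j, If j, Option (X p.1 p.2 × X p.1 p.2)) : Option (V × V) → Prop
  | none => ∃ j, ∀ᶠ i in (Uf j : Filter (If j)), f ⟨j, i⟩ = none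
  | some (a, b) => ∀ j, RepresentsPair (Uf j) (fun i => f ⟨j, i⟩) (e a j) (e b j)

theorem represents_unique (he : Function.Injective e) {y z : Option (V × V)}
    (hy : Represents Uf e f y) (hz : Represents Uf e f z) : y = z := by
  rcases y with _ | ⟨a, b⟩ <;> rcases z with _ | ⟨c, d⟩
  · rfl
  · obtain ⟨j, hj⟩ := hy
    exact absurd hj (hz j).not_eventually_none
  · obtain ⟨j, hj⟩ := hz
    exact absurd hj (hy j).not_eventually_none
  · have h := fun j => (hy j).unique (hz j)
    rw [he (funext fun j => (h j).1), he (funext fun j => (h j).2)]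

theorem represents_mul (hrel : ∀ a b, rG a b ↔ ∀ j, uprodRel (Uf j) (s j) (e a j) (e b j))
    {y z : Option (V × V)} (hf : Represents Uf e f y) (hg : Represents Uf e g z) :
    Represents Uf e (tupleMul (fun p => s p.1 p.2) f g) (adjMul rG y z) := by
  rcases y with _ | ⟨a, b⟩
  · obtain ⟨j, hj⟩ := hf
    exact ⟨j, hj.mono fun i hi => by simp [tupleMul, hi]⟩
  rcases z with _ | ⟨c, d⟩
  · obtain ⟨j, hj⟩ := hg
    exact ⟨j, hj.mono fun i hi => by simp [tupleMul, hi]⟩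
  by_cases h : rG b c
  · rw [adjMul_some_of_adj h]
    exact fun j => (hf j).mul (hg j) ((hrel b c).mp h j)
  · rw [adjMul_none_of_not_adj h]
    obtain ⟨j, hj⟩ := not_forall.mp (mt (hrel b c).mpr h)
    exact ⟨j, (hf j).mul_eventually_none (hg j) hj⟩

theorem represents_star {y : Option (V × V)} (hf : Represents Uf e f y) :
    Represents Uf e (tupleStar f) (adjStar y) := by
  rcases y with _ | ⟨a, b⟩
  · obtain ⟨j, hj⟩ := hf
    exact ⟨j, hj.mono fun i hi => by simp [tupleStar, hi]⟩
  · exact fun j => (hf j).star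

theorem exists_represents [Nonempty J] (y : Option (V × V)) : ∃ f, Represents Uf e f y := by
  rcases y with _ | ⟨a, b⟩
  · exact ⟨fun _ => none, Classical.arbitrary J, Filter.Eventually.of_forall fun _ => rfl⟩
  · exact ⟨fun p => some ((e a p.1).out p.2, (e b p.1).out p.2),
      fun j => Filter.Eventually.of_forall fun _ => rfl⟩

theorem exists_isUnaryHomImage_of_embedding [Nonempty J] (he : Function.Injective e)
    (hrel : ∀ a b, rG a b ↔ ∀ j, uprodRel (Uf j) (s j) (e a j) (e b j)) :
    ∃ B φ, IsUnaryHomImage (fun p : Σ j, If j => s p.1 p.2) rG B φ :=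
  exists_isUnaryHomImage_of_rel (Represents Uf e) (fun _ _ _ => represents_unique he)
    (fun _ _ _ _ => represents_mul hrel) (fun _ _ => represents_star) exists_represents

end ProdUltraprod

/-- Theorem: a graph `G = ⟨VG; rG⟩` lies in the universal Horn class generated
by a nonempty family of graphs `(⟨W k; rel k⟩)_{k : K}` — that is, `G` is
isomorphic to an induced subgraph of a nonempty direct product of ultraproducts
of members of the family — if and only if the adjacency semigroup `A(G)` lies
in the variety generated by the adjacency semigroups of the family — that is,
`A(G)` is a homomorphic image of a subsemigroup, closed under reversion, of a
direct product of adjacency semigroups of members of the family. -/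
theorem graph_in_uH_iff_adjacency_in_variety
    {K : Type u} [Nonempty K] {W : K → Type v} (rel : ∀ k, W k → W k → Prop)
    {VG : Type w} (rG : VG → VG → Prop) :
    (∃ (J : Type (max u v w)) (_ : Nonempty J)
        (If : J → Type (max u v w)) (_ : ∀ j, Nonempty (If j))
        (Uf : ∀ j, Ultrafilter (If j)) (k : ∀ j, If j → K)
        (e : VG → ∀ j, Quotient (uprodSetoid (Uf j) (fun i => W (k j i)))),
        Function.Injective e ∧
        ∀ a b : VG, rG a b ↔
          ∀ j, uprodRel (Uf j) (fun i => rel (k j i)) (e a j) (e b j)) ↔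
    (∃ (I' : Type (max u v w)) (k' : I' → K)
        (B : Set (∀ i, Option (W (k' i) × W (k' i))))
        (φ : (∀ i, Option (W (k' i) × W (k' i))) → Option (VG × VG)),
        (∀ f ∈ B, ∀ g ∈ B,
          (fun i => adjMul (rel (k' i)) (f i) (g i)) ∈ B ∧
            φ (fun i => adjMul (rel (k' i)) (f i) (g i)) = adjMul rG (φ f) (φ g)) ∧
        (∀ f ∈ B,
          (fun i => adjStar (f i)) ∈ B ∧
            φ (fun i => adjStar (f i)) = adjStar (φ f)) ∧
        (∀ y : Option (VG × VG), ∃ f ∈ B, φ f = y)) := by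
  change EmbedsInProdOfUltraprods rel rG ↔ _
  constructor
  · rintro ⟨J, _, If, -, Uf, k, e, he, hrel⟩
    obtain ⟨B, φ, hφ⟩ := exists_isUnaryHomImage_of_embedding (s := fun j i => rel (k j i)) he hrel
    exact ⟨_, fun p : Σ j, If j => k p.1 p.2, B, φ, (isUnaryHomImage_iff _).mp hφ⟩
  · rintro ⟨I', k', B, φ, hφ⟩
    have hφ : IsUnaryHomImage (fun i => rel (k' i)) rG B φ := (isUnaryHomImage_iff _).mpr hφ
    rcases isEmpty_or_nonempty VG with _ | _
    · exact embedsInProdOfUltraprods_of_isEmpty rel rG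
    · refine embedsInProdOfUltraprods_of_forall_finset fun t F => ?_
      obtain ⟨i, w, hw⟩ := hφ.exists_isHomOn_reflects t F
      exact ⟨k' i, w, hw⟩
end

section
/- Let (H_k)_{k∈K} be a family of graphs and let G be a graph. Then G is isomorphic to an induced subgraph of a direct product ∏_{i∈I} H_{k_i} of a nonempty family of members of the family if and only if the following three conditions hold: (0) there exists a graph homomorphism from G into some H_k; (1) for each pair of distinct vertices a, b of G there exist k ∈ K and a graph homomorphism φ : G → H_k with φ(a) ≠ φ(b); (2) for each pair of vertices a, b of G with a ≁ b in G there exist k ∈ K and a graph homomorphism φ : G → H_k with φ(a) ≁ φ(b) in H_k. -/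
/-- Lemma (separation conditions): a graph `G = ⟨VG; rG⟩` is isomorphic to an
induced subgraph of a direct product of a nonempty family of members of a
family of graphs `(⟨W k; rel k⟩)_{k : K}` if and only if (0) there is a graph
homomorphism from `G` into some member, (1) distinct vertices of `G` can be
separated by homomorphisms into members, and (2) non-adjacent pairs of vertices
of `G` can be separated by homomorphisms into members. -/
theorem induced_subgraph_of_product_iff_separation
    {K : Type u} {W : K → Type v} (rel : ∀ k, W k → W k → Prop)
    {VG : Type w} (rG : VG → VG → Prop) :
    (∃ (I : Type (max u v w)) (_ : Nonempty I) (k : I → K)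
        (e : VG → ∀ i, W (k i)),
        Function.Injective e ∧
        ∀ a b : VG, rG a b ↔ ∀ i, rel (k i) (e a i) (e b i)) ↔
    ((∃ (k : K) (φ : VG → W k), ∀ a b : VG, rG a b → rel k (φ a) (φ b)) ∧
     (∀ a b : VG, a ≠ b → ∃ (k : K) (φ : VG → W k),
        (∀ x y : VG, rG x y → rel k (φ x) (φ y)) ∧ φ a ≠ φ b) ∧
     (∀ a b : VG, ¬ rG a b → ∃ (k : K) (φ : VG → W k),
        (∀ x y : VG, rG x y → rel k (φ x) (φ y)) ∧ ¬ rel k (φ a) (φ b))) := by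
  constructor
  · rintro ⟨I, ⟨i0⟩, k, e, hinj, hiff⟩
    refine ⟨⟨k i0, fun v => e v i0, fun a b hab => (hiff a b).1 hab i0⟩, ?_, ?_⟩
    · intro a b hab
      have : e a ≠ e b := fun h => hab (hinj h)
      obtain ⟨i, hi⟩ : ∃ i, e a i ≠ e b i := by
        by_contra h; push_neg at h; exact this (funext h)
      exact ⟨k i, fun v => e v i, fun x y hxy => (hiff x y).1 hxy i, hi⟩
    · intro a b hab
      have : ¬ ∀ i, rel (k i) (e a i) (e b i) := fun h => hab ((hiff a b).2 h)
      push_neg at this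
      obtain ⟨i, hi⟩ := this
      exact ⟨k i, fun v => e v i, fun x y hxy => (hiff x y).1 hxy i, hi⟩
  · rintro ⟨⟨k0, φ0, hφ0⟩, h1, h2⟩
    refine ⟨Σ k : K, {φ : VG → W k // ∀ x y : VG, rG x y → rel k (φ x) (φ y)},
      ⟨⟨k0, φ0, hφ0⟩⟩, fun i => i.1, fun v i => i.2.1 v, ?_, ?_⟩
    · intro a b hab
      by_contra hne
      obtain ⟨k, φ, hφ, hsep⟩ := h1 a b hne
      exact hsep (congrFun hab ⟨k, φ, hφ⟩)
    · intro a b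
      constructor
      · intro hab i
        exact i.2.2 a b hab
      · intro h
        by_contra hab
        obtain ⟨k, φ, hφ, hsep⟩ := h2 a b hab
        exact hsep (h ⟨k, φ, hφ⟩)
end

section
/- Let H be a graph, u a unary semigroup word, and θ an assignment sending each letter x occurring in u to a nonzero element (i_x, j_x) of the adjacency semigroup A(H); write i_{x'} := j_x and j_{x'} := i_x. If θ(u) ≠ 0, then θ(u) is the pair whose first coordinate is i_a if the initial vertex of G[u] is ℓ_a, and is j_a if the initial vertex is r_a (for the letter a carrying the initial vertex), and whose second coordinate is j_b if the final vertex of G[u] is r_b, and is i_b if the final vertex is ℓ_b (for the letter b carrying the final vertex). -/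
/-- Unary semigroup words over an alphabet `X`: letters, products, and reversals. -/
inductive UWord (X : Type*) where
  | letter : X → UWord X
  | mul : UWord X → UWord X → UWord X
  | star : UWord X → UWord X

namespace UWord

variable {X : Type*}

/-- Evaluation of a unary semigroup word in a unary semigroup under an
assignment of the letters. -/
def eval {S : Type*} [Mul S] [Star S] (θ : X → S) : UWord X → S
  | .letter x => θ x
  | .mul u v => eval θ u * eval θ v
  | .star u => Star.star (eval θ u)

/-- Evaluation of a unary semigroup word in the adjacency semigroup of the
graph `⟨V; r⟩` under an assignment `θ` of the letters. -/
noncomputable def evalA {V : Type*} (r : V → V → Prop) (θ : X → Option (V × V)) :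
    UWord X → Option (V × V)
  | .letter x => θ x
  | .mul u v => adjMul r (evalA r θ u) (evalA r θ v)
  | .star u => adjStar (evalA r θ u)

/-- The set of letters occurring in a word. -/
def letters : UWord X → Set X
  | .letter x => {x}
  | .mul u v => letters u ∪ letters v
  | .star u => letters u

/-- Vertices of the graph `G[u]` of a word: `(x, false)` is the left vertex
`ℓ_x` and `(x, true)` is the right vertex `r_x` of the letter `x`. -/
abbrev Vtx (X : Type*) := X × Bool

/-- The pair (initial vertex, final vertex) of the graph `G[u]` of a word `u`. -/
def ends : UWord X → Vtx X × Vtx X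
  | .letter x => ((x, false), (x, true))
  | .mul u v => ((ends u).1, (ends v).2)
  | .star u => ((ends u).2, (ends u).1)

/-- The edge set of the graph `G[u]` of a word `u`. -/
def edges : UWord X → Set (Vtx X × Vtx X)
  | .letter _ => ∅
  | .mul u v => edges u ∪ edges v ∪ {((ends u).2, (ends v).1)}
  | .star u => edges u

end UWord

/-- Given an assignment `θ` of letters to (nonzero) pairs, the vertex `ℓ_x`
corresponds to the left coordinate `i_x` of `θ x`, and the vertex `r_x` to the
right coordinate `j_x`. -/
def coordOf {X V : Type*} (θ : X → V × V) : UWord.Vtx X → V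
  | (x, false) => (θ x).1
  | (x, true) => (θ x).2

/-- Lemma: if `θ` assigns nonzero values to the letters of `u` and `θ(u) ≠ 0`,
then `θ(u) = (i_ā, j_b̄)` where the first coordinate is read off from the
initial vertex of `G[u]` and the second from its final vertex. -/
theorem evalA_eq_of_ne_zero {X V : Type*} (r : V → V → Prop)
    (u : UWord X) (θ : X → V × V)
    (h : u.evalA r (fun x => some (θ x)) ≠ none) :
    u.evalA r (fun x => some (θ x)) = some (coordOf θ u.ends.1, coordOf θ u.ends.2) := by
  induction u with
  | letter x => simp [UWord.evalA, UWord.ends, coordOf]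
  | mul u v ihu ihv =>
      simp only [UWord.evalA, UWord.ends] at h ⊢
      rcases hu : u.evalA r (fun x => some (θ x)) with _ | ⟨a, b⟩
      · rw [hu] at h; exact absurd rfl h
      rcases hv : v.evalA r (fun x => some (θ x)) with _ | ⟨c, d⟩
      · rw [hu, hv] at h; simp [adjMul] at h
      rw [hu, hv] at h
      have h1 := ihu (by rw [hu]; simp)
      have h2 := ihv (by rw [hv]; simp)
      rw [hu, Option.some.injEq, Prod.mk.injEq] at h1
      rw [hv, Option.some.injEq, Prod.mk.injEq] at h2
      by_cases hbc : r b c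
      · simp [adjMul, hbc, h1.1, h2.2]
      · simp [adjMul, hbc] at h
  | star u ihu =>
      simp only [UWord.evalA, UWord.ends] at h ⊢
      rcases hu : u.evalA r (fun x => some (θ x)) with _ | ⟨a, b⟩
      · rw [hu] at h; exact absurd rfl h
      have h1 := ihu (by rw [hu]; simp)
      rw [hu, Option.some.injEq, Prod.mk.injEq] at h1
      simp [adjStar, h1.1, h1.2]
end

section
/- Let H be a graph, u a unary semigroup word, and θ an assignment sending each letter x occurring in u to a nonzero element (i_x, j_x) of the adjacency semigroup A(H). Then θ(u) ≠ 0 if and only if the map defined by ℓ_x ↦ i_x and r_x ↦ j_x is a graph homomorphism from G[u] to H. -/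
lemma evalA_key {X V : Type*} (r : V → V → Prop) (θ : X → V × V) :
    ∀ u : UWord X,
      ((∀ p ∈ u.edges, r (coordOf θ p.1) (coordOf θ p.2)) →
        u.evalA r (fun x => some (θ x)) =
          some (coordOf θ u.ends.1, coordOf θ u.ends.2)) ∧
      (u.evalA r (fun x => some (θ x)) ≠ none →
        ∀ p ∈ u.edges, r (coordOf θ p.1) (coordOf θ p.2)) := by
  intro u
  induction u with
  | letter x =>
      refine ⟨fun _ => ?_, fun _ p hp => absurd hp (by simp [UWord.edges])⟩
      simp [UWord.evalA, UWord.ends, coordOf]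
  | mul u v ihu ihv =>
      constructor
      · intro h
        have hu := ihu.1 (fun p hp => h p (Or.inl (Or.inl hp)))
        have hv := ihv.1 (fun p hp => h p (Or.inl (Or.inr hp)))
        have hr : r (coordOf θ u.ends.2) (coordOf θ v.ends.1) :=
          h _ (Or.inr rfl)
        simp [UWord.evalA, hu, hv, adjMul, hr, UWord.ends]
      · intro hne
        have hu : u.evalA r (fun x => some (θ x)) ≠ none := by
          intro h; apply hne; simp [UWord.evalA, h, adjMul]
        have hv : v.evalA r (fun x => some (θ x)) ≠ none := by
          intro h; apply hne
          rcases hu' : u.evalA r (fun x => some (θ x)) with _ | ⟨a, b⟩ <;>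
            simp [UWord.evalA, hu', h, adjMul]
        have heu := ihu.2 hu
        have hev := ihv.2 hv
        have hu' := ihu.1 heu
        have hv' := ihv.1 hev
        have hr : r (coordOf θ u.ends.2) (coordOf θ v.ends.1) := by
          by_contra hr
          apply hne
          simp [UWord.evalA, hu', hv', adjMul, hr]
        intro p hp
        rcases hp with (hp | hp) | hp
        · exact heu p hp
        · exact hev p hp
        · cases hp; exact hr
  | star u ih =>
      constructor
      · intro h
        have hu := ih.1 h
        simp [UWord.evalA, hu, adjStar, UWord.ends]
      · intro hne
        apply ih.2
        intro h; apply hne; simp [UWord.evalA, h, adjStar]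

/-- Lemma: if `θ` assigns nonzero values to the letters of `u`, then
`θ(u) ≠ 0` iff the map `ℓ_x ↦ i_x`, `r_x ↦ j_x` is a graph homomorphism from
`G[u]` to `H = ⟨V; r⟩`. -/
theorem evalA_ne_zero_iff_graphhom {X V : Type*} (r : V → V → Prop)
    (u : UWord X) (θ : X → V × V) :
    u.evalA r (fun x => some (θ x)) ≠ none ↔
      ∀ p ∈ u.edges, r (coordOf θ p.1) (coordOf θ p.2) := by
  refine ⟨(evalA_key r θ u).2, fun h => ?_⟩
  rw [(evalA_key r θ u).1 h]
  simp
end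

section
/- Every unary semigroup satisfying the identities Ψ satisfies (a(bcd)'e)' = (b'e)'c(ad')' for all elements a, b, c, d, e, and also (a(bd)'e)' = (b'e)'(ad')' for all elements a, b, d, e (the case where c is absent). -/
/-- Lemma: every unary semigroup satisfying the identities
`Ψ = {x'' ≈ x, x(yz)' ≈ (y(xz')')', (xy)'z ≈ ((x'z)'y)'}` satisfies
`(a(bcd)'e)' = (b'e)'c(ad')'` and (the case where `c` is absent)
`(a(bd)'e)' = (b'e)'(ad')'`. -/
theorem bend_of_Psi {S : Type*} [Semigroup S] [Star S]
    (h1 : ∀ x : S, star (star x) = x)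
    (h2 : ∀ x y z : S, x * star (y * z) = star (y * star (x * star z)))
    (h3 : ∀ x y z : S, star (x * y) * z = star (star (star x * z) * y)) :
    (∀ a b c d e : S,
        star (a * star (b * c * d) * e) = star (star b * e) * c * star (a * star d)) ∧
    (∀ a b d e : S,
        star (a * star (b * d) * e) = star (star b * e) * star (a * star d)) := by
  constructor
  · intro a b c d e
    rw [h2 a (b*c) d, h3 (b*c) (star (a * star d)) e, h1, h3 b c e, h1]
  · intro a b d e
    rw [h2 a b d, h3 b (star (a * star d)) e, h1]
end

section
/- Every unary semigroup satisfying the identities Ψ₁ satisfies, for all elements x, y, z: (xy)' = y'(xyy')' = (x'xy)'x' = y'(x'xyy')'x', and (xyz)' = (yz)'y(xy)'. -/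
/-- Lemma: every unary semigroup satisfying
`Ψ₁ = {x ≈ xx'x, (x'x)' ≈ x'x, x'' ≈ x, x(yz)' ≈ (y(xz')')', (xy)'z ≈ ((x'z)'y)'}`
satisfies `(xy)' ≈ y'(xyy')' ≈ (x'xy)'x' ≈ y'(x'xyy')'x'` and
`(xyz)' ≈ (yz)'y(xy)'`. -/
theorem easycons_of_Psi1 {S : Type*} [Semigroup S] [Star S]
    (h0 : ∀ x : S, x = x * star x * x)
    (h0' : ∀ x : S, star (star x * x) = star x * x)
    (h1 : ∀ x : S, star (star x) = x)
    (h2 : ∀ x y z : S, x * star (y * z) = star (y * star (x * star z)))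
    (h3 : ∀ x y z : S, star (x * y) * z = star (star (star x * z) * y)) :
    (∀ x y : S, star (x * y) = star y * star (x * y * star y)) ∧
    (∀ x y : S, star (x * y) = star (star x * x * y) * star x) ∧
    (∀ x y : S, star (x * y) = star y * star (star x * x * y * star y) * star x) ∧
    (∀ x y z : S, star (x * y * z) = star (y * z) * y * star (x * y)) := by
  -- `(xx')' = xx'`
  have hxx' : ∀ x : S, star (x * star x) = x * star x := by
    intro x
    have h := h0' (star x)
    rwa [h1] at h
  -- `x' x x' = x'`
  have hreg' : ∀ x : S, star x * x * star x = star x := by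
    intro x
    have h := h0 (star x)
    rw [h1] at h
    exact h.symm
  have key : ∀ x : S, star x * (x * star x) = star x := by
    intro x
    rw [← mul_assoc]
    exact hreg' x
  -- (D): `(x y y')' = y (xy)'`
  have hD : ∀ x y : S, star (x * y * star y) = y * star (x * y) := by
    intro x y
    have h := h2 x y (star y)
    rw [h1, hxx'] at h
    have h' := congrArg star h
    rw [h1] at h'
    rw [mul_assoc]
    exact h'
  -- (E): `(xy)' x = (x'xy)'`
  have hE : ∀ x y : S, star (x * y) * x = star (star x * x * y) := by
    intro x y
    have h := h3 x y x
    rwa [h0'] at h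
  -- (F): `(xy)' (x x') = (xy)'`
  have hF : ∀ x y : S, star (x * y) * (x * star x) = star (x * y) := by
    intro x y
    have h := h3 x y (x * star x)
    rwa [key, h1] at h
  -- (G): `y' y (xy)' = (xy)'`
  have hG : ∀ x y : S, star y * y * star (x * y) = star (x * y) := by
    intro x y
    have h := h2 (star y * y) x y
    rwa [hreg', h1] at h
  -- (H): `(y'yz)' y' = (yz)'`
  have hH : ∀ y z : S, star (star y * y * z) * star y = star (y * z) := by
    intro y z
    have h := h3 (star y * y) z (star y)
    rwa [h0', hreg', h1] at h
  have g1 : ∀ x y : S, star (x * y) = star y * star (x * y * star y) := by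
    intro x y
    rw [hD, ← mul_assoc, hG]
  have g2 : ∀ x y : S, star (x * y) = star (star x * x * y) * star x := by
    intro x y
    rw [← hE, mul_assoc, hF]
  have g3 : ∀ x y : S, star (x * y) = star y * star (star x * x * y * star y) * star x := by
    intro x y
    have h := g2 x (y * star y)
    rw [← mul_assoc x y (star y), ← mul_assoc (star x * x) y (star y)] at h
    rw [g1 x y, h, ← mul_assoc]
  have g4 : ∀ x y z : S, star (x * y * z) = star (y * z) * y * star (x * y) := by
    intro x y z
    have h := h2 (star (star y * y * z)) x y
    rw [hH, h1, ← mul_assoc] at h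
    rw [← h, ← hE]
  exact ⟨g1, g2, g3, g4⟩
end

section
/- For every unary semigroup word u over an alphabet X there exists a word w in the set N such that the identity u ≈ w holds in every unary semigroup satisfying Ψ (i.e., for every unary semigroup S satisfying Ψ and every assignment θ : X → S, θ(u) = θ(w)). -/
namespace UWord

variable {X : Type*}

/-- A literal: a letter `x` or a reversed letter `x'` (a member of `X ∪ X'`). -/
inductive IsLit : UWord X → Prop
  | letter (x : X) : IsLit (.letter x)
  | starLetter (x : X) : IsLit (.star (.letter x))

/-- A (nonempty) semigroup word over the alphabet `X ∪ X'`: a product of literals. -/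
inductive IsSgWord : UWord X → Prop
  | lit {u : UWord X} : IsLit u → IsSgWord u
  | mul {u v : UWord X} : IsSgWord u → IsSgWord v → IsSgWord (.mul u v)

/-- A semigroup word over `X ∪ X'` of length at least `2`. -/
def IsSgWord2 (u : UWord X) : Prop :=
  ∃ v w : UWord X, IsSgWord v ∧ IsSgWord w ∧ u = .mul v w

/-- The set `N` of normal forms: words of the shape
`u₁(v₁)'u₂(v₂)'⋯uₙ(vₙ)'u_{n+1}` where the `vᵢ` are semigroup words over
`X ∪ X'` of length at least `2` and the `uᵢ` are possibly empty semigroup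
words over `X ∪ X'` (with `u₁` nonempty when `n = 0`): equivalently, the
words that are products of blocks, each block being a literal or the reversal
of a semigroup word of length at least `2`. -/
inductive InN : UWord X → Prop
  | sg {u : UWord X} : IsSgWord u → InN u
  | starBlock {v : UWord X} : IsSgWord2 v → InN (.star v)
  | mul {u v : UWord X} : InN u → InN v → InN (.mul u v)

/-- Normal forms in which, moreover, each reversed block `(v)'` has `v` of
length exactly `2` over `X ∪ X'`. -/
inductive InN2 : UWord X → Prop
  | sg {u : UWord X} : IsSgWord u → InN2 u
  | starBlock {v w : UWord X} : IsLit v → IsLit w → InN2 (.star (.mul v w))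
  | mul {u v : UWord X} : InN2 u → InN2 v → InN2 (.mul u v)

end UWord
/-!
Products and reversals of normal forms must again be normal forms up to `Ψ`; only reversal needs
an argument. Write a normal form as a product of blocks (semigroup words over `X ∪ X'` and
reversals `(yz)'` of such words of length at least two). If no reversed block occurs, the word is
a semigroup word `v` and `v'` is a literal or a block. Otherwise it reads `P (yz)' D`, and `Ψ`
gives `(P (yz)' D)' = (y' D)' (P z')'`, where `y'` and `z'` are again blocks, so both factors on
the right are reversals of strictly shorter products of blocks.
-/

namespace WithOne

variable {S : Type*} [Star S]

instance : Star (WithOne S) := ⟨recOneCoe 1 fun a => ↑(star a)⟩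

@[simp, norm_cast]
theorem star_coe (a : S) : star (a : WithOne S) = ↑(star a) := rfl

end WithOne

structure IsPsiSemigroup (S : Type*) [Semigroup S] [Star S] : Prop where
  star_star : ∀ x : S, star (star x) = x
  mul_star_mul : ∀ x y z : S, x * star (y * z) = star (y * star (x * star z))
  star_mul_mul : ∀ x y z : S, star (x * y) * z = star (star (star x * z) * y)

namespace IsPsiSemigroup

variable {S : Type*} [Semigroup S] [Star S]

/-- `(P (yz)' D)' = (y' D)' (P z')'`, where the identity adjoined to `S` stands for an empty
prefix `P` or suffix `D`. -/
theorem star_mul_star_mul_mul (hS : IsPsiSemigroup S) (p d : WithOne S) (y z : S) :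
    star (p * ↑(star (y * z)) * d) = star (↑(star y) * d) * star (p * ↑(star z)) := by
  cases p with
  | one =>
    cases d with
    | one => simp only [one_mul, mul_one, WithOne.star_coe, hS.star_star, WithOne.coe_mul]
    | coe e =>
      simp only [one_mul, ← WithOne.coe_mul, WithOne.star_coe, WithOne.coe_inj]
      rw [hS.star_mul_mul, hS.star_star, hS.star_star]
  | coe q =>
    cases d with
    | one =>
      simp only [mul_one, ← WithOne.coe_mul, WithOne.star_coe, WithOne.coe_inj]
      rw [hS.mul_star_mul, hS.star_star, hS.star_star]
    | coe e =>
      simp only [← WithOne.coe_mul, WithOne.star_coe, WithOne.coe_inj]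
      rw [mul_assoc, hS.star_mul_mul, hS.mul_star_mul, hS.star_star]

end IsPsiSemigroup

namespace UWord

universe u

variable {X : Type*}

@[simp]
theorem eval_mul {S : Type*} [Mul S] [Star S] (θ : X → S) (v w : UWord X) :
    (v.mul w).eval θ = v.eval θ * w.eval θ := rfl

@[simp]
theorem eval_star {S : Type*} [Mul S] [Star S] (θ : X → S) (v : UWord X) :
    v.star.eval θ = Star.star (v.eval θ) := rfl

def length : UWord X → ℕ
  | .letter _ => 1
  | .mul v w => length v + length w
  | .star v => length v

theorem length_pos : ∀ w : UWord X, 0 < w.length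
  | .letter _ => Nat.one_pos
  | .mul v _ => Nat.add_pos_left v.length_pos _
  | .star v => v.length_pos

def PsiEquiv (v w : UWord X) : Prop :=
  ∀ (S : Type u) [Semigroup S] [Star S], IsPsiSemigroup S → ∀ θ : X → S, v.eval θ = w.eval θ

namespace PsiEquiv

theorem refl (w : UWord X) : PsiEquiv.{u} w w := fun _ _ _ _ _ => rfl

theorem trans {v₁ v₂ v₃ : UWord X} (h₁ : PsiEquiv.{u} v₁ v₂) (h₂ : PsiEquiv.{u} v₂ v₃) :
    PsiEquiv.{u} v₁ v₃ := fun S _ _ hS θ => (h₁ S hS θ).trans (h₂ S hS θ)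

theorem mul {v v' w w' : UWord X} (hv : PsiEquiv.{u} v v') (hw : PsiEquiv.{u} w w') :
    PsiEquiv.{u} (v.mul w) (v'.mul w') := fun S _ _ hS θ => by
  simp only [eval_mul, hv S hS θ, hw S hS θ]

theorem star {v w : UWord X} (h : PsiEquiv.{u} v w) : PsiEquiv.{u} v.star w.star :=
  fun S _ _ hS θ => by simp only [eval_star, h S hS θ]

end PsiEquiv

/-- The factors of a normal form in `N`. -/
inductive IsBlock : UWord X → Prop
  | sg {v : UWord X} : IsSgWord v → IsBlock v
  | starSg2 {v : UWord X} : IsSgWord2 v → IsBlock (.star v)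

theorem IsBlock.inN {b : UWord X} : IsBlock b → InN b
  | .sg h => .sg h
  | .starSg2 h => .starBlock h

theorem exists_isBlock_psiEquiv_star {v : UWord X} (hv : IsSgWord v) :
    ∃ b, IsBlock b ∧ b.length = v.length ∧ PsiEquiv.{u} v.star b := by
  rcases hv with (⟨x⟩ | ⟨x⟩) | @⟨v₁, v₂, h₁, h₂⟩
  · exact ⟨_, .sg (.lit (.starLetter x)), rfl, .refl _⟩
  · exact ⟨_, .sg (.lit (.letter x)), rfl, fun S _ _ hS θ => hS.star_star (θ x)⟩
  · exact ⟨_, .starSg2 ⟨v₁, v₂, h₁, h₂, rfl⟩, rfl, .refl _⟩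

def evalProd {S : Type*} [Semigroup S] [Star S] (θ : X → S) (L : List (UWord X)) :
    WithOne S :=
  (L.map fun b => ((b.eval θ : S) : WithOne S)).prod

theorem InN.exists_blocks {w : UWord X} (hw : InN w) :
    ∃ L : List (UWord X), L ≠ [] ∧ (∀ b ∈ L, IsBlock b) ∧
      ∀ (S : Type*) [Semigroup S] [Star S] (θ : X → S),
        ((w.eval θ : S) : WithOne S) = evalProd θ L := by
  induction hw with
  | sg h => exact ⟨[_], List.cons_ne_nil _ _, by simpa using .sg h, fun _ _ _ _ => by
      simp [evalProd]⟩
  | starBlock h => exact ⟨[_], List.cons_ne_nil _ _, by simpa using .starSg2 h, fun _ _ _ _ => by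
      simp [evalProd]⟩
  | mul _ _ ih₁ ih₂ =>
    obtain ⟨L₁, hL₁, hB₁, he₁⟩ := ih₁
    obtain ⟨L₂, -, hB₂, he₂⟩ := ih₂
    refine ⟨L₁ ++ L₂, by simp [hL₁], List.forall_mem_append.2 ⟨hB₁, hB₂⟩, fun S _ _ θ => ?_⟩
    simp only [eval_mul, WithOne.coe_mul, he₁, he₂, evalProd, List.map_append, List.prod_append]

theorem exists_isSgWord_evalProd {L : List (UWord X)} (hL : L ≠ []) (h : ∀ b ∈ L, IsSgWord b) :
    ∃ v, IsSgWord v ∧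
      ∀ (S : Type*) [Semigroup S] [Star S] (θ : X → S),
        ((v.eval θ : S) : WithOne S) = evalProd θ L := by
  induction L with
  | nil => exact absurd rfl hL
  | cons a L ih =>
    rw [List.forall_mem_cons] at h
    rcases eq_or_ne L [] with rfl | hL'
    · exact ⟨a, h.1, fun _ _ _ _ => by simp [evalProd]⟩
    · obtain ⟨v, hv, he⟩ := ih hL' h.2
      exact ⟨a.mul v, .mul h.1 hv, fun S _ _ θ => by
        rw [eval_mul, WithOne.coe_mul, he]; simp [evalProd]⟩

theorem exists_inN_star_evalProd (L : List (UWord X)) (hL : L ≠ []) (hB : ∀ b ∈ L, IsBlock b) :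
    ∃ w, InN w ∧ ∀ (S : Type u) [Semigroup S] [Star S], IsPsiSemigroup S → ∀ θ : X → S,
      Star.star (evalProd θ L) = ((w.eval θ : S) : WithOne S) := by
  induction hn : (L.map length).sum using Nat.strong_induction_on generalizing L with
  | _ n ih =>
  by_cases hstar : ∃ c, IsSgWord2 c ∧ c.star ∈ L
  · obtain ⟨_, ⟨y, z, hy, hz, rfl⟩, hmem⟩ := hstar
    obtain ⟨P, D, rfl⟩ := List.append_of_mem hmem
    obtain ⟨by', hby', hby'l, hby'e⟩ := exists_isBlock_psiEquiv_star.{u} hy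
    obtain ⟨bz', hbz', hbz'l, hbz'e⟩ := exists_isBlock_psiEquiv_star.{u} hz
    simp only [List.forall_mem_append, List.forall_mem_cons] at hB
    have hy₀ := y.length_pos
    have hz₀ := z.length_pos
    simp only [List.map_append, List.map_cons, List.sum_append, List.sum_cons, length] at hn
    have hlt₁ : ((by' :: D).map length).sum < n := by
      simp only [List.map_cons, List.sum_cons]; omega
    have hlt₂ : ((P ++ [bz']).map length).sum < n := by
      simp only [List.map_append, List.map_cons, List.map_nil, List.sum_append, List.sum_cons,
        List.sum_nil]
      omega
    obtain ⟨w₁, hw₁, e₁⟩ := ih _ hlt₁ (by' :: D) (List.cons_ne_nil _ _)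
      (List.forall_mem_cons.2 ⟨hby', hB.2.2⟩) rfl
    obtain ⟨w₂, hw₂, e₂⟩ := ih _ hlt₂ (P ++ [bz']) (by simp)
      (List.forall_mem_append.2 ⟨hB.1, by simpa using hbz'⟩) rfl
    refine ⟨w₁.mul w₂, hw₁.mul hw₂, fun S _ _ hS θ => ?_⟩
    calc Star.star (evalProd θ (P ++ (y.mul z).star :: D))
        = Star.star (evalProd θ P * ↑(Star.star (y.eval θ * z.eval θ)) * evalProd θ D) := by
          simp [evalProd, mul_assoc]
      _ = Star.star (↑(Star.star (y.eval θ)) * evalProd θ D) *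
            Star.star (evalProd θ P * ↑(Star.star (z.eval θ))) :=
          hS.star_mul_star_mul_mul _ _ _ _
      _ = Star.star (evalProd θ (by' :: D)) * Star.star (evalProd θ (P ++ [bz'])) := by
          rw [← eval_star, ← eval_star, hby'e S hS θ, hbz'e S hS θ]
          simp [evalProd]
      _ = (((w₁.mul w₂).eval θ : S) : WithOne S) := by rw [e₁ S hS θ, e₂ S hS θ]; rfl
  · have hsg : ∀ b ∈ L, IsSgWord b := fun b hb => by
      rcases hB b hb with h | h
      exacts [h, absurd ⟨_, h, hb⟩ hstar]
    obtain ⟨v, hv, he⟩ := exists_isSgWord_evalProd hL hsg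
    obtain ⟨b, hb, -, hbe⟩ := exists_isBlock_psiEquiv_star.{u} hv
    exact ⟨b, hb.inN, fun S _ _ hS θ => by rw [← he, WithOne.star_coe, ← eval_star, hbe S hS θ]⟩

theorem exists_inN_psiEquiv_star {w : UWord X} (hw : InN w) :
    ∃ w', InN w' ∧ PsiEquiv.{u} w.star w' := by
  obtain ⟨L, hL, hB, he⟩ := hw.exists_blocks
  obtain ⟨w', hw', e⟩ := exists_inN_star_evalProd L hL hB
  exact ⟨w', hw', fun S _ _ hS θ => WithOne.coe_injective <| by
    rw [eval_star, ← WithOne.star_coe, he, e S hS θ]⟩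

theorem exists_inN_psiEquiv (v : UWord X) : ∃ w, InN w ∧ PsiEquiv.{u} v w := by
  induction v with
  | letter x => exact ⟨_, .sg (.lit (.letter x)), .refl _⟩
  | mul _ _ ih₁ ih₂ =>
    obtain ⟨w₁, hw₁, h₁⟩ := ih₁
    obtain ⟨w₂, hw₂, h₂⟩ := ih₂
    exact ⟨_, hw₁.mul hw₂, h₁.mul h₂⟩
  | star _ ih =>
    obtain ⟨w₁, hw₁, h₁⟩ := ih
    obtain ⟨w, hw, h⟩ := exists_inN_psiEquiv_star hw₁
    exact ⟨w, hw, h₁.star.trans h⟩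

end UWord

/-- Proposition: every unary semigroup word reduces, modulo the identities
`Ψ = {x'' ≈ x, x(yz)' ≈ (y(xz')')', (xy)'z ≈ ((x'z)'y)'}`, to a word in `N`. -/
theorem exists_normal_form_mod_Psi {X : Type v} (u : UWord X) :
    ∃ w : UWord X, UWord.InN w ∧
      ∀ (S : Type u) [Semigroup S] [Star S],
        (∀ x : S, star (star x) = x) →
        (∀ x y z : S, x * star (y * z) = star (y * star (x * star z))) →
        (∀ x y z : S, star (x * y) * z = star (star (star x * z) * y)) →
        ∀ θ : X → S, u.eval θ = w.eval θ := by
  obtain ⟨w, hw, h⟩ := u.exists_inN_psiEquiv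
  exact ⟨w, hw, fun S _ _ h₁ h₂ h₃ θ => h S ⟨h₁, h₂, h₃⟩ θ⟩
end

section
/- Let S be a unary semigroup satisfying Σ_ref, let S¹ denote S with an identity element 1 adjoined, and let ε denote either the identity map on S or the reversion a ↦ a'. Then for all x, y ∈ S and all u₁, u₂ ∈ S¹ the following hold (where all the displayed products of an element of S with elements of S¹ lie in S): (ε(x)u₁)'u₂(xyx) = (ε(xyx)u₁)'u₂(xyx); (xyx)u₂(u₁ε(x))' = (xyx)u₂(u₁ε(xyx))'; (u₁ε(x))'u₂(xyx) = (u₁ε(xyx))'u₂(xyx); and (xyx)u₂(ε(x)u₁)' = (xyx)u₂(ε(xyx)u₁)'. -/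
/-- Right multiplication by an element of `S¹ = S ∪ {1}` (modelled as `Option S`,
with `none` the adjoined identity): the result lies in `S`. -/
def omulR {S : Type*} [Mul S] (a : S) : Option S → S
  | none => a
  | some b => a * b

/-- Left multiplication by an element of `S¹ = S ∪ {1}` (modelled as `Option S`,
with `none` the adjoined identity): the result lies in `S`. -/
def omulL {S : Type*} [Mul S] : Option S → S → S
  | none, a => a
  | some b, a => b * a

/-- Lemma: in any unary semigroup satisfying `Σ_ref`, with `ε` either the
identity map or reversion, for all `x, y ∈ S` and `u₁, u₂ ∈ S¹`:
`(ε(x)u₁)'u₂(xyx) = (ε(xyx)u₁)'u₂(xyx)`,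
`(xyx)u₂(u₁ε(x))' = (xyx)u₂(u₁ε(xyx))'`,
`(u₁ε(x))'u₂(xyx) = (u₁ε(xyx))'u₂(xyx)`, and
`(xyx)u₂(ε(x)u₁)' = (xyx)u₂(ε(xyx)u₁)'`. -/
theorem Sigmacons {S : Type*} [Semigroup S] [Star S]
    (h1 : ∀ x : S, star (star x) = x)
    (h2 : ∀ x y z : S, x * star (y * z) = star (y * star (x * star z)))
    (h3 : ∀ x y z : S, star (x * y) * z = star (star (star x * z) * y))
    (h4 : ∀ x : S, x * star x * x = x)
    (h5 : ∀ x : S, star (x * star x) = x * star x)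
    (h6 : ∀ x : S, x * x * x = x * x)
    (h7 : ∀ x y z : S, x * y * x * z * x = x * z * x * y * x * z * x)
    (h8 : ∀ x y z : S, x * z * x * y * x * z * x = x * z * x * y * x)
    (h9 : ∀ x y z : S, star x * y * x * z * x = star (x * z * x) * y * x * z * x)
    (h10 : ∀ x y z : S, x * y * x * z * star x = x * y * x * z * star (x * y * x))
    (ε : S → S) (hε : ε = id ∨ ε = (fun a => star a)) :
    ∀ (x y : S) (u₁ u₂ : Option S),
      (star (omulR (ε x) u₁) * omulL u₂ (x * y * x) =
        star (omulR (ε (x * y * x)) u₁) * omulL u₂ (x * y * x)) ∧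
      (omulR (x * y * x) u₂ * star (omulL u₁ (ε x)) =
        omulR (x * y * x) u₂ * star (omulL u₁ (ε (x * y * x)))) ∧
      (star (omulL u₁ (ε x)) * omulL u₂ (x * y * x) =
        star (omulL u₁ (ε (x * y * x))) * omulL u₂ (x * y * x)) ∧
      (omulR (x * y * x) u₂ * star (omulR (ε x) u₁) =
        omulR (x * y * x) u₂ * star (omulR (ε (x * y * x)) u₁)) := by
  intro x y u₁ u₂
  -- normalized (right-associated) basic consequences
  have N1 : ∀ a : S, x*(a*(x*(y*x))) = x*(y*(x*(a*(x*(y*x))))) := fun a => by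
    simpa only [mul_assoc] using h7 x a y
  have N1c : ∀ a d : S, x*(a*(x*(y*(x*d)))) = x*(y*(x*(a*(x*(y*(x*d)))))) := fun a d => by
    simpa only [mul_assoc] using congrArg (· * d) (h7 x a y)
  have N2 : ∀ a : S, x*(y*(x*(a*x))) = x*(y*(x*(a*(x*(y*x))))) := fun a => by
    simpa only [mul_assoc] using (h8 x a y).symm
  have N3 : ∀ a : S, star x*(a*(x*(y*x))) = star (x*(y*x))*(a*(x*(y*x))) := fun a => by
    simpa only [mul_assoc] using h9 x a y
  have N3c : ∀ a d : S, star x*(a*(x*(y*(x*d)))) = star (x*(y*x))*(a*(x*(y*(x*d)))) := fun a d => by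
    simpa only [mul_assoc] using congrArg (· * d) (h9 x a y)
  have N4 : ∀ a : S, x*(y*(x*(a*star x))) = x*(y*(x*(a*star (x*(y*x))))) := fun a => by
    simpa only [mul_assoc] using h10 x y a
  have N1z : x*(x*(y*x)) = x*(y*(x*(x*(y*x)))) := by
    have s1 : x*(x*(y*x)) = x*(x*(x*(y*x))) := by
      simpa only [mul_assoc] using congrArg (· * (y*x)) (h6 x).symm
    have s2 : x*(x*(x*(y*x))) = x*(y*(x*(x*(x*(y*x))))) := by
      simpa only [mul_assoc] using h7 x x y
    have s3 : x*(y*(x*(x*(x*(y*x))))) = x*(y*(x*(x*(y*x)))) := by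
      simpa only [mul_assoc] using congrArg (fun t => x*y*t) (congrArg (· * (y*x)) (h6 x))
    exact s1.trans (s2.trans s3)
  have N2z : x*(y*(x*x)) = x*(y*(x*(x*(y*x)))) := by
    have s1 : x*(y*(x*x)) = x*(y*(x*(x*x))) := by
      simpa only [mul_assoc] using congrArg (fun t => x*y*t) (h6 x).symm
    have s2 : x*(y*(x*(x*x))) = x*(y*(x*(x*(x*(y*x))))) := by
      simpa only [mul_assoc] using (h8 x x y).symm
    have s3 : x*(y*(x*(x*(x*(y*x))))) = x*(y*(x*(x*(y*x)))) := by
      simpa only [mul_assoc] using congrArg (fun t => x*y*t) (congrArg (· * (y*x)) (h6 x))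
    exact s1.trans (s2.trans s3)
  have N3z : star x*(x*(y*x)) = star (x*(y*x))*(x*(y*x)) := by
    have s1 : star x*(x*(y*x)) = star x*(x*(star x*(x*(y*x)))) := by
      simpa only [mul_assoc] using congrArg (fun t => star x * (t*(y*x))) (h4 x).symm
    have s2 : star x*(x*(star x*(x*(y*x)))) = star (x*(y*x))*(x*(star x*(x*(y*x)))) := by
      simpa only [mul_assoc] using h9 x (x*star x) y
    have s3 : star (x*(y*x))*(x*(star x*(x*(y*x)))) = star (x*(y*x))*(x*(y*x)) := by
      simpa only [mul_assoc] using congrArg (fun t => star (x*y*x) * (t*(y*x))) (h4 x)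
    exact s1.trans (s2.trans s3)
  have N4z : x*(y*(x*star x)) = x*(y*(x*star (x*(y*x)))) := by
    have s1 : x*(y*(x*star x)) = x*(y*(x*(star x*(x*star x)))) := by
      simpa only [mul_assoc] using congrArg (fun t => x*y*t) (congrArg (· * star x) (h4 x)).symm
    have s2 : x*(y*(x*(star x*(x*star x)))) = x*(y*(x*(star x*(x*star (x*(y*x)))))) := by
      simpa only [mul_assoc] using h10 x y (star x * x)
    have s3 : x*(y*(x*(star x*(x*star (x*(y*x)))))) = x*(y*(x*star (x*(y*x)))) := by
      simpa only [mul_assoc] using congrArg (fun t => x*y*t) (congrArg (· * star (x*(y*x))) (h4 x))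
    exact s1.trans (s2.trans s3)
  -- key swapping lemmas
  have key1 : ∀ g b : S, star g = x*(y*(x*b)) → x*g = x*(y*(x*g)) := by
    intro g b hg
    calc x*g = x*(g*star g*g) := by rw [h4]
      _ = x*(g*(x*(y*(x*b)))*g) := by rw [hg]
      _ = x*(y*(x*(g*(x*(y*(x*(b*g))))))) := by
            have t := N1c g (b*g); simp only [mul_assoc] at t ⊢; exact t
      _ = x*(y*(x*(g*star g*g))) := by rw [hg]; simp only [mul_assoc]
      _ = x*(y*(x*g)) := by rw [h4]
  have key3 : ∀ g b : S, star g = x*(y*(x*b)) → star x*g = star (x*(y*x))*g := by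
    intro g b hg
    calc star x*g = star x*(g*star g*g) := by rw [h4]
      _ = star x*(g*(x*(y*(x*b)))*g) := by rw [hg]
      _ = star (x*(y*x))*(g*(x*(y*(x*(b*g))))) := by
            have t := N3c g (b*g); simp only [mul_assoc] at t ⊢; exact t
      _ = star (x*(y*x))*(g*star g*g) := by rw [hg]; simp only [mul_assoc]
      _ = star (x*(y*x))*g := by rw [h4]
  have key2 : ∀ g a : S, star g = a*(x*(y*x)) → g*x = g*(x*(y*x)) := by
    intro g a hg
    calc g*x = g*star g*g*x := by rw [h4]
      _ = g*(a*(x*(y*x)))*g*x := by rw [hg]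
      _ = g*(a*(x*(y*x)))*g*(x*(y*x)) := by
            have t := N2 g; simp only [mul_assoc] at t ⊢; rw [t]
      _ = g*star g*g*(x*(y*x)) := by rw [hg]
      _ = g*(x*(y*x)) := by rw [h4]
  have key4 : ∀ g a : S, star g = a*(x*(y*x)) → g*star x = g*star (x*(y*x)) := by
    intro g a hg
    calc g*star x = g*star g*g*star x := by rw [h4]
      _ = g*(a*(x*(y*x)))*g*star x := by rw [hg]
      _ = g*(a*(x*(y*x)))*g*star (x*(y*x)) := by
            have t := N4 g; simp only [mul_assoc] at t ⊢; rw [t]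
      _ = g*star g*g*star (x*(y*x)) := by rw [hg]
      _ = g*star (x*(y*x)) := by rw [h4]
  rcases hε with rfl | rfl
  · rcases u₁ with _ | u
    · rcases u₂ with _ | v
      · simp only [omulR, omulL, id_eq]
        refine ⟨?_, ?_, ?_, ?_⟩
        · simpa only [mul_assoc] using N3z
        · simpa only [mul_assoc] using N4z
        · simpa only [mul_assoc] using N3z
        · simpa only [mul_assoc] using N4z
      · simp only [omulR, omulL, id_eq]
        refine ⟨?_, ?_, ?_, ?_⟩
        · simpa only [mul_assoc] using N3 v
        · simpa only [mul_assoc] using N4 v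
        · simpa only [mul_assoc] using N3 v
        · simpa only [mul_assoc] using N4 v
    · rcases u₂ with _ | v
      · simp only [omulR, omulL, id_eq]
        refine ⟨?_, ?_, ?_, ?_⟩
        · rw [h3 x u (x*y*x), h3 (x*y*x) u (x*y*x)]
          simp only [mul_assoc]; rw [N3z]
        · rw [h2 (x*y*x) u x, h2 (x*y*x) u (x*y*x)]
          simp only [mul_assoc]; rw [N4z]
        · rw [h3 u x (x*y*x), h3 u (x*y*x) (x*y*x)]
          simp only [mul_assoc]
          exact congrArg star (key2 _ (star u) (h1 _))
        · rw [h2 (x*y*x) x u, h2 (x*y*x) (x*y*x) u]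
          simp only [mul_assoc]
          exact congrArg star (key1 _ (star u) (h1 _))
      · simp only [omulR, omulL, id_eq]
        refine ⟨?_, ?_, ?_, ?_⟩
        · rw [h3 x u (v*(x*y*x)), h3 (x*y*x) u (v*(x*y*x))]
          simp only [mul_assoc]; rw [N3 v]
        · rw [h2 ((x*y*x)*v) u x, h2 ((x*y*x)*v) u (x*y*x)]
          simp only [mul_assoc]; rw [N4 v]
        · rw [h3 u x (v*(x*y*x)), h3 u (x*y*x) (v*(x*y*x))]
          simp only [mul_assoc]
          exact congrArg star (key2 _ (star u*v) ((h1 _).trans (mul_assoc _ _ _).symm))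
        · rw [h2 ((x*y*x)*v) x u, h2 ((x*y*x)*v) (x*y*x) u]
          simp only [mul_assoc]
          exact congrArg star (key1 _ (v*star u) (h1 _))
  · rcases u₁ with _ | u
    · rcases u₂ with _ | v
      · simp only [omulR, omulL]
        refine ⟨?_, ?_, ?_, ?_⟩
        · rw [h1 x, h1 (x*y*x)]; simpa only [mul_assoc] using N1z
        · rw [h1 x, h1 (x*y*x)]; simpa only [mul_assoc] using N2z
        · rw [h1 x, h1 (x*y*x)]; simpa only [mul_assoc] using N1z
        · rw [h1 x, h1 (x*y*x)]; simpa only [mul_assoc] using N2z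
      · simp only [omulR, omulL]
        refine ⟨?_, ?_, ?_, ?_⟩
        · rw [h1 x, h1 (x*y*x)]; simpa only [mul_assoc] using N1 v
        · rw [h1 x, h1 (x*y*x)]; simpa only [mul_assoc] using N2 v
        · rw [h1 x, h1 (x*y*x)]; simpa only [mul_assoc] using N1 v
        · rw [h1 x, h1 (x*y*x)]; simpa only [mul_assoc] using N2 v
    · rcases u₂ with _ | v
      · simp only [omulR, omulL]
        refine ⟨?_, ?_, ?_, ?_⟩
        · rw [h3 (star x) u (x*y*x), h3 (star (x*y*x)) u (x*y*x), h1 x, h1 (x*y*x)]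
          simp only [mul_assoc]
          conv_lhs => rw [N1z]
        · rw [h2 (x*y*x) u (star x), h2 (x*y*x) u (star (x*y*x)), h1 x, h1 (x*y*x)]
          simp only [mul_assoc]; rw [N2z]
        · rw [h3 u (star x) (x*y*x), h3 u (star (x*y*x)) (x*y*x)]
          simp only [mul_assoc]
          exact congrArg star (key4 _ (star u) (h1 _))
        · rw [h2 (x*y*x) (star x) u, h2 (x*y*x) (star (x*y*x)) u]
          simp only [mul_assoc]
          exact congrArg star (key3 _ (star u) (h1 _))
      · simp only [omulR, omulL]
        refine ⟨?_, ?_, ?_, ?_⟩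
        · rw [h3 (star x) u (v*(x*y*x)), h3 (star (x*y*x)) u (v*(x*y*x)), h1 x, h1 (x*y*x)]
          simp only [mul_assoc]
          conv_lhs => rw [N1 v]
        · rw [h2 ((x*y*x)*v) u (star x), h2 ((x*y*x)*v) u (star (x*y*x)), h1 x, h1 (x*y*x)]
          simp only [mul_assoc]; rw [N2 v]
        · rw [h3 u (star x) (v*(x*y*x)), h3 u (star (x*y*x)) (v*(x*y*x))]
          simp only [mul_assoc]
          exact congrArg star (key4 _ (star u*v) ((h1 _).trans (mul_assoc _ _ _).symm))
        · rw [h2 ((x*y*x)*v) (star x) u, h2 ((x*y*x)*v) (star (x*y*x)) u]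
          simp only [mul_assoc]
          exact congrArg star (key3 _ (v*star u) (h1 _))
end

section
/- Let S be a unary semigroup satisfying the identities xx'x ≈ x, x'' ≈ x, (x'x)' ≈ x'x, and (xy)' ≈ y'(x'xyy')'x'. If the semigroup reduct of S is isomorphic to a rectangular band, i.e., to a semigroup on a set I × J (with I, J nonempty) with multiplication (i₁,j₁)(i₂,j₂) = (i₁,j₂), then S is isomorphic, as a unary semigroup, to a square band. -/
/-- Lemma: a unary semigroup satisfying `xx'x ≈ x`, `x'' ≈ x`, `(x'x)' ≈ x'x`
and `(xy)' ≈ y'(x'xyy')'x'` whose semigroup reduct is a rectangular band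
(a semigroup on `I × J` with `(i₁,j₁)(i₂,j₂) = (i₁,j₂)`) is isomorphic, as a
unary semigroup, to a square band. -/
theorem cs_model_is_square_band {S : Type u} [Semigroup S] [Star S]
    (h1 : ∀ x : S, x * star x * x = x)
    (h2 : ∀ x : S, star (star x) = x)
    (h3 : ∀ x : S, star (star x * x) = star x * x)
    (h4 : ∀ x y : S, star (x * y) = star y * star (star x * x * y * star y) * star x)
    {I J : Type u} [Nonempty I] [Nonempty J]
    (f : S ≃ I × J) (hf : ∀ a b : S, f (a * b) = ((f a).1, (f b).2)) :
    ∃ (V : Type u), Nonempty V ∧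
      ∃ e : S ≃ V × V,
        (∀ a b : S, e (a * b) = ((e a).1, (e b).2)) ∧
        (∀ a : S, e (star a) = ((e a).2, (e a).1)) := by
  classical
  obtain ⟨i₀⟩ := ‹Nonempty I›
  obtain ⟨j₀⟩ := ‹Nonempty J›
  have hstar : ∀ x y : S, f (star (x * y)) = ((f (star y)).1, (f (star x)).2) := by
    intro x y
    rw [h4, hf, hf]
  have key2 : ∀ x y : S, (f x).1 = (f y).1 → (f (star x)).2 = (f (star y)).2 := by
    intro x y h
    have hxy : x * y = y := f.injective (by rw [hf, h])
    have := hstar x y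
    rw [hxy] at this
    rw [this]
  have key1 : ∀ x y : S, (f x).2 = (f y).2 → (f (star x)).1 = (f (star y)).1 := by
    intro x y h
    have hyx : y * x = y := f.injective (by rw [hf, h])
    have := hstar y x
    rw [hyx] at this
    rw [this]
  set α : J → I := fun j => (f (star (f.symm (i₀, j)))).1 with hα_def
  set β : I → J := fun i => (f (star (f.symm (i, j₀)))).2 with hβ_def
  have hα : ∀ z : S, (f (star z)).1 = α (f z).2 := fun z =>
    key1 z (f.symm (i₀, (f z).2)) (by simp)
  have hβ : ∀ z : S, (f (star z)).2 = β (f z).1 := fun z =>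
    key2 z (f.symm ((f z).1, j₀)) (by simp)
  have inv : ∀ z : S, f z = (α (β (f z).1), β (α (f z).2)) := by
    intro z
    conv_lhs => rw [← h2 z]
    have e1 : (f (star (star z))).1 = α (β (f z).1) := by rw [hα (star z), hβ z]
    have e2 : (f (star (star z))).2 = β (α (f z).2) := by rw [hβ (star z), hα z]
    exact Prod.ext e1 e2
  have hαβ : ∀ i : I, α (β i) = i := by
    intro i
    have := congrArg Prod.fst (inv (f.symm (i, j₀)))
    simpa using this.symm
  have hβα : ∀ j : J, β (α j) = j := by
    intro j
    have := congrArg Prod.snd (inv (f.symm (i₀, j)))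
    simpa using this.symm
  let g : J ≃ I := ⟨α, β, hβα, hαβ⟩
  let e : S ≃ I × I := f.trans ((Equiv.refl I).prodCongr g)
  refine ⟨I, ⟨i₀⟩, e, ?_, ?_⟩
  · intro a b
    simp [e, hf]
  · intro a
    have : e (star a) = ((f (star a)).1, α (f (star a)).2) := rfl
    rw [this, hα a, hβ a, hαβ]
    rfl
end
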